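/- Let a ∈ ℝ^{md}, γ ∈ (0,1), ε > 0, and let μ be a Borel probability measure on Σ. Then for μ-a.e. x ∈ Σ there exists n(x) ∈ ℕ such that for all n ≥ n(x) and all integers ℓ ≥ 0, π^a_*μ( B(π^a(x), γ^n) ) ≥ γ^{nε} · μ([x|ℓ]) · Z_{x|ℓ}(γ^n), where B(z,r) is the closed ball of radius r about z in ℝ^d. -/

import Mathlib

/-!
Write `π = π^a` and `R = ∑‖a_i‖ / (1 - max‖T_i‖)`, so that `π(Σ) ⊆ B(0, R)`. A cylinder `[I]`
of length `ℓ` is mapped by `π` into a translate of the ellipsoid `T_I B(0, R)`, whose semi-axes are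
`R α_k(T_I)`; it is covered by `O(Z_I(r)⁻¹)` balls of radius `r/2`. If `x ∈ [I]` is *bad*, i.e.
`π_*μ(B(πx, r)) < w Z_I(r) μ[I]`, then every ball of the cover containing `πx` lies in
`B(πx, r)`, so each ball of the cover carries bad mass less than `w Z_I(r) μ[I]` and the bad part
of `[I]` has measure `O(w μ[I])`; summing over the words of length `ℓ`, the bad set at level `ℓ`
has measure `O(w)`. Cylinders of length at least
`L(n) = O(n)` are mapped into balls of radius `γⁿ` and have no bad points, so with `r = γⁿ` and
`w = γ^{nε}` the bad sets at scale `n` have total measure `O(n γ^{nε})`, which is summable;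
Borel–Cantelli concludes.
-/

open MeasureTheory Filter Topology Metric
open scoped ENNReal NNReal

noncomputable section

namespace SelfAffineProj

/-- The word product `T_{x|n} = T_{x_1} ⋯ T_{x_n}`. -/
def wordProd {m d : ℕ} (T : Fin m → Matrix (Fin d) (Fin d) ℝ) (x : ℕ → Fin m) (n : ℕ) :
    Matrix (Fin d) (Fin d) ℝ :=
  ((List.range n).map fun k => T (x k)).prod

/-- The cylinder `[x|n]` of sequences agreeing with `x` on the first `n` coordinates. -/
def cylinder {m : ℕ} (x : ℕ → Fin m) (n : ℕ) : Set (ℕ → Fin m) :=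
  { y | ∀ k < n, y k = x k }

/-- `sval M k` is the `(k+1)`-th largest singular value `α_{k+1}(M)` of `M`. -/
def sval {d : ℕ} (M : Matrix (Fin d) (Fin d) ℝ) (k : Fin d) : ℝ :=
  Real.sqrt
    ((Matrix.isHermitian_iff_isSymm.mpr (Matrix.isSymm_transpose_mul_self M)).eigenvalues
      (Tuple.sort (Matrix.isHermitian_iff_isSymm.mpr (Matrix.isSymm_transpose_mul_self M)).eigenvalues k.rev))

/-- `svalN M i` is `α_{i+1}(M)` for `i < d`, junk value `0` otherwise. -/
def svalN {d : ℕ} (M : Matrix (Fin d) (Fin d) ℝ) (i : ℕ) : ℝ :=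
  if h : i < d then sval M ⟨i, h⟩ else 0

/-- The singular value function `φ^s`. -/
def phi {d : ℕ} (s : ℝ) (M : Matrix (Fin d) (Fin d) ℝ) : ℝ :=
  if s < (d : ℝ) then
    (∏ i ∈ Finset.range ⌊s⌋₊, svalN M i) * svalN M ⌊s⌋₊ ^ (s - (⌊s⌋₊ : ℝ))
  else |M.det| ^ (s / (d : ℝ))

/-- The singular value function extended to `s ∈ [0,∞]`, with `φ^∞ = 0`. -/
def phiE {d : ℕ} (s : ℝ≥0∞) (M : Matrix (Fin d) (Fin d) ℝ) : ℝ≥0∞ :=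
  if s = ⊤ then 0 else ENNReal.ofReal (phi s.toReal M)

/-- The continuous linear map on Euclidean space induced by a matrix. -/
def mCLM {d : ℕ} (M : Matrix (Fin d) (Fin d) ℝ) :
    EuclideanSpace ℝ (Fin d) →L[ℝ] EuclideanSpace ℝ (Fin d) :=
  Matrix.toEuclideanCLM (𝕜 := ℝ) M

/-- `seqComp F n = F 0 ∘ F 1 ∘ ⋯ ∘ F (n-1)`. -/
def seqComp {E : Type*} (F : ℕ → E → E) : ℕ → E → E
  | 0 => id
  | n + 1 => F 0 ∘ seqComp (fun k => F (k + 1)) n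

/-- The coding map `π^a(x) = lim_n f^a_{x_1} ∘ ⋯ ∘ f^a_{x_n}(0)`. -/
def codingMap {m d : ℕ} (T : Fin m → Matrix (Fin d) (Fin d) ℝ)
    (a : Fin m → EuclideanSpace ℝ (Fin d)) (x : ℕ → Fin m) : EuclideanSpace ℝ (Fin d) :=
  limUnder atTop fun n => seqComp (fun k y => mCLM (T (x k)) y + a (x k)) n 0

/-- `Z_M(r) = ∏_{k=1}^d min{r, α_k(M)}/α_k(M)`. -/
def Zmat {d : ℕ} (M : Matrix (Fin d) (Fin d) ℝ) (r : ℝ) : ℝ :=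
  ∏ k : Fin d, min r (sval M k) / sval M k

/-- `Z_{x|n}(r)`. -/
def Zword {m d : ℕ} (T : Fin m → Matrix (Fin d) (Fin d) ℝ) (x : ℕ → Fin m) (n : ℕ)
    (r : ℝ) : ℝ :=
  Zmat (wordProd T x n) r

/-- The length `|x ∧ y|` of the longest common initial segment of `x` and `y`. -/
def firstDiff {m : ℕ} (x y : ℕ → Fin m) : ℕ :=
  sInf { n | x n ≠ y n }

/-- `Z_{x ∧ y}(r)`, with the convention `Z_{x ∧ y}(r) = 1` for `x = y`. -/
def Zwedge {m d : ℕ} (T : Fin m → Matrix (Fin d) (Fin d) ℝ) (x y : ℕ → Fin m) (r : ℝ) : ℝ :=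
  letI := Classical.dec (x = y)
  if x = y then 1 else Zword T x (firstDiff x y) r

/-- `G_μ(x,r) = ∫ Z_{x∧y}(r) dμ(y)`. -/
def Gfun {m d : ℕ} (T : Fin m → Matrix (Fin d) (Fin d) ℝ) (μ : Measure (ℕ → Fin m))
    (x : ℕ → Fin m) (r : ℝ) : ℝ :=
  ∫ y, Zwedge T x y r ∂μ

/-- `D(μ,x) = limsup_{r→0} log G_μ(x,r)/log r`. -/
def Dfun {m d : ℕ} (T : Fin m → Matrix (Fin d) (Fin d) ℝ) (μ : Measure (ℕ → Fin m))
    (x : ℕ → Fin m) : ℝ≥0∞ :=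
  limsup (fun r : ℝ => ENNReal.ofReal (Real.log (Gfun T μ x r) / Real.log r)) (𝓝[>] 0)

/-- Lower local dimension of a measure on `ℝ^d` at a point. -/
def lowerLocalDim {d : ℕ} (η : Measure (EuclideanSpace ℝ (Fin d)))
    (z : EuclideanSpace ℝ (Fin d)) : ℝ≥0∞ :=
  liminf (fun r : ℝ => ENNReal.ofReal (Real.log (η (closedBall z r)).toReal / Real.log r))
    (𝓝[>] 0)

/-- Upper local dimension of a measure on `ℝ^d` at a point. -/
def upperLocalDim {d : ℕ} (η : Measure (EuclideanSpace ℝ (Fin d)))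
    (z : EuclideanSpace ℝ (Fin d)) : ℝ≥0∞ :=
  limsup (fun r : ℝ => ENNReal.ofReal (Real.log (η (closedBall z r)).toReal / Real.log r))
    (𝓝[>] 0)

/-- Lower Hausdorff dimension of a measure. -/
def lowerHausdorffDim {d : ℕ} (η : Measure (EuclideanSpace ℝ (Fin d))) : ℝ≥0∞ :=
  essInf (lowerLocalDim η) η

/-- Upper Hausdorff dimension of a measure. -/
def upperHausdorffDim {d : ℕ} (η : Measure (EuclideanSpace ℝ (Fin d))) : ℝ≥0∞ :=
  essSup (lowerLocalDim η) η

/-- Lower packing dimension of a measure. -/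
def lowerPackingDim {d : ℕ} (η : Measure (EuclideanSpace ℝ (Fin d))) : ℝ≥0∞ :=
  essInf (upperLocalDim η) η

/-- Upper packing dimension of a measure. -/
def upperPackingDim {d : ℕ} (η : Measure (EuclideanSpace ℝ (Fin d))) : ℝ≥0∞ :=
  essSup (upperLocalDim η) η

/-- A measure is exact dimensional if its local dimension exists a.e. and is a.e. constant. -/
def exactDimensional {d : ℕ} (η : Measure (EuclideanSpace ℝ (Fin d))) : Prop :=
  ∃ C : ℝ≥0∞, ∀ᵐ z ∂η, lowerLocalDim η z = C ∧ upperLocalDim η z = C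

/-- Cylinder of a finite word given as a list. -/
def cylL {m : ℕ} (I : List (Fin m)) : Set (ℕ → Fin m) :=
  { y | ∀ (k : ℕ) (hk : k < I.length), y k = I.get ⟨k, hk⟩ }

/-- Word product for a word given as a list. -/
def wordProdL {m d : ℕ} (T : Fin m → Matrix (Fin d) (Fin d) ℝ) (I : List (Fin m)) :
    Matrix (Fin d) (Fin d) ℝ :=
  (I.map T).prod

/-- `M^s_n(E)`: the Falconer net pre-measure at level `n`. -/
def netMeasureAux {m d : ℕ} (T : Fin m → Matrix (Fin d) (Fin d) ℝ) (s : ℝ)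
    (E : Set (ℕ → Fin m)) (n : ℕ) : ℝ≥0∞ :=
  ⨅ (C : Set (List (Fin m))) (_ : ∀ I ∈ C, n ≤ I.length) (_ : E ⊆ ⋃ I ∈ C, cylL I),
    ∑' I : C, ENNReal.ofReal (phi s (wordProdL T (I : List (Fin m))))

/-- `M^s(E) = lim_n M^s_n(E)`. -/
def netMeasure {m d : ℕ} (T : Fin m → Matrix (Fin d) (Fin d) ℝ) (s : ℝ)
    (E : Set (ℕ → Fin m)) : ℝ≥0∞ :=
  ⨆ n, netMeasureAux T s E n

/-- `dim_M E`. -/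
def dimM {m d : ℕ} (T : Fin m → Matrix (Fin d) (Fin d) ℝ) (E : Set (ℕ → Fin m)) : ℝ :=
  sInf { s : ℝ | 0 ≤ s ∧ netMeasure T s E < ⊤ }

/-- The energy `∬ Z_{x∧y}(r) dμ(x) dμ(y)`. -/
def energy {m d : ℕ} (T : Fin m → Matrix (Fin d) (Fin d) ℝ) (μ : Measure (ℕ → Fin m))
    (r : ℝ) : ℝ :=
  ∫ x, ∫ y, Zwedge T x y r ∂μ ∂μ

/-- The `r`-capacity `C_r(E)` of a set `E ⊆ Σ`. -/
def capFn {m d : ℕ} (T : Fin m → Matrix (Fin d) (Fin d) ℝ) (E : Set (ℕ → Fin m)) (r : ℝ) : ℝ :=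
  (sInf { v : ℝ | ∃ μ : Measure (ℕ → Fin m),
      IsProbabilityMeasure μ ∧ μ Eᶜ = 0 ∧ v = energy T μ r })⁻¹

/-- Lower capacity dimension. -/
def lowerCapDim {m d : ℕ} (T : Fin m → Matrix (Fin d) (Fin d) ℝ)
    (E : Set (ℕ → Fin m)) : ℝ≥0∞ :=
  liminf (fun r : ℝ => ENNReal.ofReal (Real.log (capFn T E r) / (-Real.log r))) (𝓝[>] 0)

/-- Upper capacity dimension. -/
def upperCapDim {m d : ℕ} (T : Fin m → Matrix (Fin d) (Fin d) ℝ)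
    (E : Set (ℕ → Fin m)) : ℝ≥0∞ :=
  limsup (fun r : ℝ => ENNReal.ofReal (Real.log (capFn T E r) / (-Real.log r))) (𝓝[>] 0)

/-- `N_r(F)`: the minimal number of sets of diameter at most `r` needed to cover `F`. -/
def coverNum {d : ℕ} (F : Set (EuclideanSpace ℝ (Fin d))) (r : ℝ) : ℝ≥0∞ :=
  ⨅ (C : Finset (Set (EuclideanSpace ℝ (Fin d)))) (_ : F ⊆ ⋃ s ∈ C, s)
    (_ : ∀ s ∈ C, Metric.diam s ≤ r), (C.card : ℝ≥0∞)

/-- Lower box-counting dimension. -/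
def lowerBoxDim {d : ℕ} (F : Set (EuclideanSpace ℝ (Fin d))) : ℝ≥0∞ :=
  liminf (fun r : ℝ => ENNReal.ofReal (Real.log (coverNum F r).toReal / (-Real.log r))) (𝓝[>] 0)

/-- Upper box-counting dimension. -/
def upperBoxDim {d : ℕ} (F : Set (EuclideanSpace ℝ (Fin d))) : ℝ≥0∞ :=
  limsup (fun r : ℝ => ENNReal.ofReal (Real.log (coverNum F r).toReal / (-Real.log r))) (𝓝[>] 0)

section SeqComp

variable {E : Type*}

lemma seqComp_succ_right (F : ℕ → E → E) (n : ℕ) :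
    seqComp F (n + 1) = seqComp F n ∘ F n := by
  induction n generalizing F with
  | zero => rfl
  | succ n ih =>
    change F 0 ∘ seqComp (fun k => F (k + 1)) (n + 1) = _
    rw [ih]
    rfl

lemma seqComp_congr {F F' : ℕ → E → E} {n : ℕ} (h : ∀ k < n, F k = F' k) :
    seqComp F n = seqComp F' n := by
  induction n generalizing F F' with
  | zero => rfl
  | succ n ih =>
    change F 0 ∘ _ = F' 0 ∘ _
    rw [h 0 n.succ_pos, ih fun k hk => h (k + 1) (by omega)]

lemma seqComp_add (F : ℕ → E → E) (p n : ℕ) :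
    seqComp F (p + n) = seqComp F p ∘ seqComp (fun k => F (k + p)) n := by
  induction n with
  | zero => rfl
  | succ n ih =>
    rw [← add_assoc, seqComp_succ_right, ih, seqComp_succ_right, add_comm n p]
    rfl

end SeqComp

section MeasureBounds

lemma DependsOn.measurable_of_countable {ι α β : Type*} [MeasurableSpace α] [Countable α]
    [MeasurableSingletonClass α] [MeasurableSpace β] {f : (ι → α) → β} {s : Set ι} [Finite s]
    (hf : DependsOn f s) : Measurable f := by
  rcases isEmpty_or_nonempty (ι → α) with h | ⟨⟨x⟩⟩
  · exact Subsingleton.measurable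
  have : Nonempty β := ⟨f x⟩
  obtain ⟨g, rfl⟩ := dependsOn_iff_exists_comp.mp hf
  exact (_root_.measurable_of_countable g).comp (Set.measurable_restrict s)

variable {X : Type*} [MeasurableSpace X] (μ : Measure X)

lemma measure_le_card_mul_of_cover {E : Type*} [PseudoMetricSpace E] (f : X → E) {S : Set X}
    {P : Finset E} {r : ℝ} {C : ℝ≥0∞} (hcover : ∀ x ∈ S, ∃ p ∈ P, dist (f x) p ≤ r / 2)
    (hsmall : ∀ x ∈ S, μ (f ⁻¹' closedBall (f x) r) ≤ C) : μ S ≤ P.card * C := by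
  have hpiece (p : E) : μ (S ∩ f ⁻¹' closedBall p (r / 2)) ≤ C := by
    rcases Set.eq_empty_or_nonempty (S ∩ f ⁻¹' closedBall p (r / 2)) with h | ⟨x, hxS, hxp⟩
    · simp [h]
    refine (measure_mono fun z (hz : z ∈ S ∩ _) => ?_).trans (hsmall x hxS)
    have hzp := hz.2
    have := dist_triangle_right (f z) (f x) p
    simp only [Set.mem_preimage, mem_closedBall] at hzp hxp ⊢
    linarith
  have hS : S ⊆ ⋃ p ∈ P, S ∩ f ⁻¹' closedBall p (r / 2) := fun x hx =>
    let ⟨p, hp, hxp⟩ := hcover x hx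
    Set.mem_biUnion hp ⟨hx, hxp⟩
  calc μ S ≤ ∑ p ∈ P, μ (S ∩ f ⁻¹' closedBall p (r / 2)) :=
        (measure_mono hS).trans (measure_biUnion_finset_le _ _)
    _ ≤ ∑ _p ∈ P, C := Finset.sum_le_sum fun p _ => hpiece p
    _ = P.card * C := by rw [Finset.sum_const, nsmul_eq_mul]

lemma measure_le_mul_of_forall_fiber {β : Type*} [Fintype β] [MeasurableSpace β]
    [MeasurableSingletonClass β] {f : X → β} (hf : Measurable f) {S : Set X} {C : ℝ≥0∞}
    (h : ∀ b, μ (S ∩ f ⁻¹' {b}) ≤ C * μ (f ⁻¹' {b})) : μ S ≤ C * μ Set.univ := by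
  have hS : S ⊆ ⋃ b, S ∩ f ⁻¹' {b} := fun x hx => Set.mem_iUnion.mpr ⟨f x, hx, rfl⟩
  calc μ S ≤ ∑ b, μ (S ∩ f ⁻¹' {b}) := (measure_mono hS).trans (measure_iUnion_fintype_le _ _)
    _ ≤ ∑ b, C * μ (f ⁻¹' {b}) := Finset.sum_le_sum fun b _ => h b
    _ = C * μ Set.univ := by
        rw [← Finset.mul_sum, sum_measure_preimage_singleton _ fun b _ =>
          hf (measurableSet_singleton b), Finset.coe_univ, Set.preimage_univ]

end MeasureBounds

lemma exists_lt_floor_add_one_abs_sub_le {v R s : ℝ} (hv : |v| ≤ R) (hs : 0 < s) :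
    ∃ t : ℕ, t < ⌊2 * R / s⌋₊ + 1 ∧ |v - (-R + t * s)| ≤ s := by
  have hq : 0 ≤ (v + R) / s := div_nonneg (by linarith [neg_abs_le v]) hs.le
  refine ⟨⌊(v + R) / s⌋₊, Nat.lt_succ_of_le (Nat.floor_le_floor ?_), ?_⟩
  · gcongr; linarith [le_abs_self v]
  have hlo := Nat.floor_le hq
  have hhi := Nat.lt_floor_add_one ((v + R) / s)
  rw [le_div_iff₀ hs] at hlo
  rw [div_lt_iff₀ hs] at hhi
  rw [abs_le]
  constructor <;> nlinarith

lemma floor_add_one_mul_min_div_le {R r s α D : ℝ} (hR : 0 ≤ R) (hs : 0 < s) (hα : 0 < α)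
    (hD : 0 ≤ D) (hr : r = s * D * α) :
    (⌊2 * R / s⌋₊ + 1 : ℝ) * (min r α / α) ≤ 2 * R * D + 1 := by
  have hr0 : 0 ≤ r := by rw [hr]; positivity
  calc (⌊2 * R / s⌋₊ + 1 : ℝ) * (min r α / α) ≤ (2 * R / s + 1) * (min r α / α) := by
        gcongr
        exact Nat.floor_le (by positivity)
    _ = 2 * R / (s * α) * min r α + min r α / α := by field_simp
    _ ≤ 2 * R / (s * α) * r + 1 := by
        gcongr
        · exact min_le_left _ _
        · exact div_le_one_of_le₀ (min_le_right _ _) hα.le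
    _ = 2 * R * D + 1 := by rw [hr]; field_simp

lemma exists_mul_pow_add_mul_le {c γ : ℝ} (hc0 : 0 ≤ c) (hc1 : c < 1) (hγ : 0 < γ) (C : ℝ) :
    ∃ B₀ B₁ : ℕ, ∀ n : ℕ, C * c ^ (B₀ + B₁ * n) ≤ γ ^ n := by
  have hlim := tendsto_pow_atTop_nhds_zero_of_lt_one hc0 hc1
  obtain ⟨B₀, hB₀⟩ := ((hlim.const_mul C).eventually_lt_const
    (by rw [mul_zero]; exact one_pos)).exists
  obtain ⟨B₁, hB₁⟩ := (hlim.eventually_lt_const hγ).exists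
  refine ⟨B₀, B₁, fun n => ?_⟩
  rw [pow_add, pow_mul, ← mul_assoc]
  exact (mul_le_of_le_one_left (by positivity) hB₀.le).trans
    (pow_le_pow_left₀ (by positivity) hB₁.le n)

lemma tsum_natCast_mul_ofReal_pow_mul_ne_top {q : ℝ} (hq0 : 0 ≤ q) (hq1 : q < 1) (B₀ B₁ : ℕ)
    {K : ℝ} (hK : 0 ≤ K) :
    ∑' n : ℕ, ((B₀ + B₁ * n : ℕ) : ℝ≥0∞) * ENNReal.ofReal (q ^ n * K) ≠ ⊤ := by
  have hsum : Summable fun n : ℕ => ((B₀ + B₁ * n : ℕ) : ℝ) * (q ^ n * K) := by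
    have h₀ := (summable_geometric_of_lt_one hq0 hq1).mul_left (B₀ : ℝ)
    have h₁ := (summable_pow_mul_geometric_of_norm_lt_one 1
      (by rwa [Real.norm_of_nonneg hq0])).mul_left (B₁ : ℝ)
    exact ((h₀.add h₁).mul_right K).congr fun n => by push_cast; ring
  convert ENNReal.ofReal_ne_top (r := ∑' n : ℕ, ((B₀ + B₁ * n : ℕ) : ℝ) * (q ^ n * K))
  rw [ENNReal.ofReal_tsum_of_nonneg (fun n => by positivity) hsum]
  refine tsum_congr fun n => ?_
  rw [ENNReal.ofReal_mul (Nat.cast_nonneg _), ENNReal.ofReal_natCast]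

section Coding

variable {m d : ℕ} (T : Fin m → Matrix (Fin d) (Fin d) ℝ)
  (a : Fin m → EuclideanSpace ℝ (Fin d))

def affineStep (x : ℕ → Fin m) (k : ℕ) (y : EuclideanSpace ℝ (Fin d)) :
    EuclideanSpace ℝ (Fin d) :=
  mCLM (T (x k)) y + a (x k)

def partialCoding (x : ℕ → Fin m) (n : ℕ) : EuclideanSpace ℝ (Fin d) :=
  seqComp (affineStep T a x) n 0

lemma mCLM_mul (M N : Matrix (Fin d) (Fin d) ℝ) : mCLM (M * N) = mCLM M * mCLM N :=
  map_mul _ _ _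

lemma mCLM_one : mCLM (1 : Matrix (Fin d) (Fin d) ℝ) = 1 :=
  map_one _

lemma wordProd_zero (x : ℕ → Fin m) : wordProd T x 0 = 1 :=
  rfl

lemma wordProd_succ (x : ℕ → Fin m) (n : ℕ) :
    wordProd T x (n + 1) = wordProd T x n * T (x n) := by
  simp [wordProd, List.range_succ]

lemma wordProd_congr {x y : ℕ → Fin m} {ℓ : ℕ} (h : ∀ k < ℓ, y k = x k) :
    wordProd T y ℓ = wordProd T x ℓ := by
  unfold wordProd
  congr 1
  exact List.map_congr_left fun k hk => by rw [h k (List.mem_range.mp hk)]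

lemma isUnit_wordProd (hT : ∀ i, IsUnit (T i)) (x : ℕ → Fin m) (ℓ : ℕ) :
    IsUnit (wordProd T x ℓ) := by
  induction ℓ with
  | zero => simp [wordProd_zero]
  | succ n ih => rw [wordProd_succ]; exact ih.mul (hT _)

lemma seqComp_affineStep_apply (x : ℕ → Fin m) (n : ℕ) (y : EuclideanSpace ℝ (Fin d)) :
    seqComp (affineStep T a x) n y = mCLM (wordProd T x n) y + partialCoding T a x n := by
  induction n generalizing y with
  | zero => simp [wordProd_zero, mCLM_one, partialCoding, seqComp]
  | succ n ih =>
    rw [partialCoding, seqComp_succ_right, Function.comp_apply, Function.comp_apply, ih, ih,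
      wordProd_succ, mCLM_mul]
    simp only [affineStep, map_add, map_zero, zero_add, ContinuousLinearMap.mul_def,
      ContinuousLinearMap.comp_apply]
    abel

lemma partialCoding_succ (x : ℕ → Fin m) (n : ℕ) :
    partialCoding T a x (n + 1) = mCLM (wordProd T x n) (a (x n)) + partialCoding T a x n := by
  conv_lhs => rw [partialCoding, seqComp_succ_right, Function.comp_apply,
    seqComp_affineStep_apply]
  simp [affineStep]

lemma partialCoding_add (x : ℕ → Fin m) (ℓ n : ℕ) :
    partialCoding T a x (ℓ + n) =
      mCLM (wordProd T x ℓ) (partialCoding T a (fun k => x (k + ℓ)) n) + partialCoding T a x ℓ := by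
  rw [partialCoding, seqComp_add, Function.comp_apply, seqComp_affineStep_apply]
  rfl

lemma partialCoding_congr {x y : ℕ → Fin m} {ℓ : ℕ} (h : ∀ k < ℓ, y k = x k) :
    partialCoding T a y ℓ = partialCoding T a x ℓ := by
  unfold partialCoding
  rw [seqComp_congr fun k hk => by unfold affineStep; rw [h k hk]]
  rfl

variable {c A : ℝ}

lemma norm_mCLM_wordProd_le (hc0 : 0 ≤ c) (hc : ∀ i, ‖mCLM (T i)‖ ≤ c)
    (x : ℕ → Fin m) (n : ℕ) : ‖mCLM (wordProd T x n)‖ ≤ c ^ n := by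
  induction n with
  | zero =>
    rw [wordProd_zero, mCLM_one, pow_zero, ContinuousLinearMap.one_def]
    exact ContinuousLinearMap.norm_id_le
  | succ n ih =>
    rw [wordProd_succ, mCLM_mul, pow_succ]
    exact (norm_mul_le _ _).trans (mul_le_mul ih (hc _) (norm_nonneg _) (pow_nonneg hc0 n))

lemma norm_partialCoding_succ_sub_le (hc0 : 0 ≤ c) (hc : ∀ i, ‖mCLM (T i)‖ ≤ c)
    (hA : ∀ i, ‖a i‖ ≤ A) (x : ℕ → Fin m) (n : ℕ) :
    ‖partialCoding T a x (n + 1) - partialCoding T a x n‖ ≤ A * c ^ n := by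
  rw [partialCoding_succ, add_sub_cancel_right, mul_comm]
  exact ((mCLM _).le_opNorm _).trans
    (mul_le_mul (norm_mCLM_wordProd_le T hc0 hc x n) (hA _) (norm_nonneg _) (pow_nonneg hc0 n))

lemma norm_partialCoding_le (hc0 : 0 ≤ c) (hc1 : c < 1) (hc : ∀ i, ‖mCLM (T i)‖ ≤ c)
    (hA : ∀ i, ‖a i‖ ≤ A) (x : ℕ → Fin m) (n : ℕ) :
    ‖partialCoding T a x n‖ ≤ A / (1 - c) := by
  have hA0 : 0 ≤ A := (norm_nonneg _).trans (hA (x 0))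
  have hsum : ‖partialCoding T a x n‖ ≤ ∑ k ∈ Finset.range n, A * c ^ k := by
    induction n with
    | zero => simp [partialCoding, seqComp]
    | succ n ih =>
      rw [Finset.sum_range_succ, ← sub_add_cancel (partialCoding T a x (n + 1))]
      exact (norm_add_le _ _).trans
        (by linarith [norm_partialCoding_succ_sub_le T a hc0 hc hA x n])
  calc ‖partialCoding T a x n‖ ≤ ∑ k ∈ Finset.range n, A * c ^ k := hsum
    _ = A * ∑ k ∈ Finset.range n, c ^ k := (Finset.mul_sum _ _ _).symm
    _ ≤ A * (1 - c)⁻¹ := by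
      gcongr
      rw [← tsum_geometric_of_lt_one hc0 hc1]
      exact (summable_geometric_of_lt_one hc0 hc1).sum_le_tsum _ fun k _ => pow_nonneg hc0 k
    _ = A / (1 - c) := rfl

lemma tendsto_partialCoding (hc0 : 0 ≤ c) (hc1 : c < 1) (hc : ∀ i, ‖mCLM (T i)‖ ≤ c)
    (hA : ∀ i, ‖a i‖ ≤ A) (x : ℕ → Fin m) :
    Tendsto (partialCoding T a x) atTop (𝓝 (codingMap T a x)) := by
  have hcauchy : CauchySeq (partialCoding T a x) :=
    cauchySeq_of_le_geometric c A hc1 fun n => by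
      rw [dist_comm, dist_eq_norm]
      exact norm_partialCoding_succ_sub_le T a hc0 hc hA x n
  obtain ⟨l, hl⟩ := cauchySeq_tendsto_of_complete hcauchy
  rwa [show codingMap T a x = limUnder atTop (partialCoding T a x) from rfl, hl.limUnder_eq]

lemma norm_codingMap_le (hc0 : 0 ≤ c) (hc1 : c < 1) (hc : ∀ i, ‖mCLM (T i)‖ ≤ c)
    (hA : ∀ i, ‖a i‖ ≤ A) (x : ℕ → Fin m) :
    ‖codingMap T a x‖ ≤ A / (1 - c) :=
  le_of_tendsto' (tendsto_partialCoding T a hc0 hc1 hc hA x).norm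
    (norm_partialCoding_le T a hc0 hc1 hc hA x)

lemma codingMap_eq_shift (hc0 : 0 ≤ c) (hc1 : c < 1) (hc : ∀ i, ‖mCLM (T i)‖ ≤ c)
    (hA : ∀ i, ‖a i‖ ≤ A) (x : ℕ → Fin m) (ℓ : ℕ) :
    codingMap T a x =
      mCLM (wordProd T x ℓ) (codingMap T a (fun k => x (k + ℓ))) + partialCoding T a x ℓ := by
  have hshift : Tendsto (fun n => partialCoding T a x (ℓ + n)) atTop (𝓝 (codingMap T a x)) :=
    (tendsto_partialCoding T a hc0 hc1 hc hA x).comp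
      (tendsto_atTop_mono (fun n => Nat.le_add_left n ℓ) tendsto_id)
  have hlim : Tendsto (fun n => partialCoding T a x (ℓ + n)) atTop
      (𝓝 (mCLM (wordProd T x ℓ) (codingMap T a (fun k => x (k + ℓ))) + partialCoding T a x ℓ)) := by
    simp_rw [partialCoding_add]
    exact (((mCLM _).continuous.tendsto _).comp
      (tendsto_partialCoding T a hc0 hc1 hc hA _)).add_const _
  exact tendsto_nhds_unique hshift hlim

lemma norm_codingMap_sub_le_of_agree (hc0 : 0 ≤ c) (hc1 : c < 1) (hc : ∀ i, ‖mCLM (T i)‖ ≤ c)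
    (hA : ∀ i, ‖a i‖ ≤ A) {x y : ℕ → Fin m} {ℓ : ℕ} (h : ∀ k < ℓ, y k = x k) :
    ‖codingMap T a y - codingMap T a x‖ ≤ 2 * (A / (1 - c)) * c ^ ℓ := by
  rw [codingMap_eq_shift T a hc0 hc1 hc hA y ℓ, codingMap_eq_shift T a hc0 hc1 hc hA x ℓ,
    wordProd_congr T h, partialCoding_congr T a h, add_sub_add_right_eq_sub, ← map_sub, mul_comm]
  refine ((mCLM _).le_opNorm _).trans (mul_le_mul (norm_mCLM_wordProd_le T hc0 hc x ℓ) ?_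
    (norm_nonneg _) (pow_nonneg hc0 ℓ))
  have hy := norm_codingMap_le T a hc0 hc1 hc hA fun k => y (k + ℓ)
  have hx := norm_codingMap_le T a hc0 hc1 hc hA fun k => x (k + ℓ)
  exact (norm_sub_le _ _).trans (by linarith)

lemma measurable_codingMap (hc0 : 0 ≤ c) (hc1 : c < 1) (hc : ∀ i, ‖mCLM (T i)‖ ≤ c)
    (hA : ∀ i, ‖a i‖ ≤ A) : Measurable (codingMap T a) :=
  measurable_of_tendsto_metrizable' (f := fun n x => partialCoding T a x n) atTop
    (fun n => DependsOn.measurable_of_countable (s := Set.Iio n) fun _ _ h =>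
      partialCoding_congr T a h)
    (tendsto_pi_nhds.mpr (tendsto_partialCoding T a hc0 hc1 hc hA))

end Coding

section SingularValues

open Matrix
open scoped InnerProductSpace

variable {d : ℕ}

lemma isHermitian_transpose_mul_self (M : Matrix (Fin d) (Fin d) ℝ) : (Mᵀ * M).IsHermitian :=
  isHermitian_iff_isSymm.mpr (isSymm_transpose_mul_self M)

lemma eigenvalues_transpose_mul_self_pos {M : Matrix (Fin d) (Fin d) ℝ} (hM : IsUnit M)
    (j : Fin d) : 0 < (isHermitian_transpose_mul_self M).eigenvalues j :=
  (PosDef.conjTranspose_mul_self M (mulVec_injective_iff_isUnit.mpr hM)).eigenvalues_pos j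

lemma norm_mCLM_eigenvectorBasis (M : Matrix (Fin d) (Fin d) ℝ) (j : Fin d) :
    ‖mCLM M ((isHermitian_transpose_mul_self M).eigenvectorBasis j)‖ =
      √((isHermitian_transpose_mul_self M).eigenvalues j) := by
  set hH := isHermitian_transpose_mul_self M
  set u := hH.eigenvectorBasis j
  have hu : ‖u‖ = 1 := hH.eigenvectorBasis.orthonormal.1 j
  rw [← Real.sqrt_sq (norm_nonneg _), ← real_inner_self_eq_norm_sq]
  congr 1
  calc ⟪mCLM M u, mCLM M u⟫_ℝ = WithLp.ofLp u ⬝ᵥ (Mᵀ * M) *ᵥ WithLp.ofLp u := by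
        rw [← mulVec_mulVec, dotProduct_mulVec, vecMul_transpose, dotProduct_comm]
        rfl
    _ = hH.eigenvalues j * ⟪u, u⟫_ℝ := by
        rw [hH.mulVec_eigenvectorBasis j, dotProduct_smul, smul_eq_mul, dotProduct_comm]
        rfl
    _ = hH.eigenvalues j := by rw [real_inner_self_eq_norm_sq, hu, one_pow, mul_one]

lemma prod_sval_eq_prod_sqrt_eigenvalues (M : Matrix (Fin d) (Fin d) ℝ) (f : ℝ → ℝ) :
    ∏ k, f (sval M k) = ∏ j, f √((isHermitian_transpose_mul_self M).eigenvalues j) := by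
  simpa [sval] using Equiv.prod_comp
    (Fin.revPerm.trans (Tuple.sort (isHermitian_transpose_mul_self M).eigenvalues))
    fun j => f √((isHermitian_transpose_mul_self M).eigenvalues j)

lemma sval_nonneg (M : Matrix (Fin d) (Fin d) ℝ) (k : Fin d) : 0 ≤ sval M k :=
  Real.sqrt_nonneg _

lemma Zmat_factor_nonneg (M : Matrix (Fin d) (Fin d) ℝ) {r : ℝ} (hr : 0 ≤ r) (k : Fin d) :
    0 ≤ min r (sval M k) / sval M k :=
  div_nonneg (le_min hr (sval_nonneg M k)) (sval_nonneg M k)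

lemma Zmat_nonneg (M : Matrix (Fin d) (Fin d) ℝ) {r : ℝ} (hr : 0 ≤ r) : 0 ≤ Zmat M r :=
  Finset.prod_nonneg fun k _ => Zmat_factor_nonneg M hr k

lemma Zmat_le_one (M : Matrix (Fin d) (Fin d) ℝ) {r : ℝ} (hr : 0 ≤ r) : Zmat M r ≤ 1 :=
  Finset.prod_le_one (fun k _ => Zmat_factor_nonneg M hr k)
    fun k _ => div_le_one_of_le₀ (min_le_right _ _) (sval_nonneg M k)

lemma Zmat_le_two_pow_mul_Zmat_half (M : Matrix (Fin d) (Fin d) ℝ) {r : ℝ} (hr : 0 ≤ r) :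
    Zmat M r ≤ 2 ^ d * Zmat M (r / 2) := by
  have hfactor (k : Fin d) :
      min r (sval M k) / sval M k ≤ 2 * (min (r / 2) (sval M k) / sval M k) := by
    rw [← mul_div_assoc]
    gcongr
    · exact sval_nonneg M k
    · simp only [min_def]; split_ifs <;> linarith [sval_nonneg M k]
  calc Zmat M r ≤ ∏ k, 2 * (min (r / 2) (sval M k) / sval M k) :=
        Finset.prod_le_prod (fun k _ => Zmat_factor_nonneg M hr k) fun k _ => hfactor k
    _ = 2 ^ d * Zmat M (r / 2) := by
        rw [Finset.prod_mul_distrib, Finset.prod_const, Finset.card_univ, Fintype.card_fin]; rfl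

/-- The image of `v ↦ c + M v` on the ball of radius `R` is an ellipsoid with semi-axes `R α_j`
along the images of the eigenvectors of `MᵀM`; a grid with mesh `r / (d α_j)` along these axes is
an `r`-net of it. -/
def axisMesh (M : Matrix (Fin d) (Fin d) ℝ) (r : ℝ) (j : Fin d) : ℝ :=
  r / (d * √((isHermitian_transpose_mul_self M).eigenvalues j))

open Classical in
def ellipsoidNet (M : Matrix (Fin d) (Fin d) ℝ) (r R : ℝ) (c : EuclideanSpace ℝ (Fin d)) :
    Finset (EuclideanSpace ℝ (Fin d)) :=
  (Fintype.piFinset fun j => Finset.range (⌊2 * R / axisMesh M r j⌋₊ + 1)).image fun t =>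
    c + ∑ j, (-R + t j * axisMesh M r j) •
      mCLM M ((isHermitian_transpose_mul_self M).eigenvectorBasis j)

lemma axisMesh_mul_sqrt_eigenvalues {M : Matrix (Fin d) (Fin d) ℝ} (hM : IsUnit M) (r : ℝ)
    (j : Fin d) :
    axisMesh M r j * √((isHermitian_transpose_mul_self M).eigenvalues j) = r / d := by
  have hα := Real.sqrt_pos.mpr (eigenvalues_transpose_mul_self_pos hM j)
  have hd : (0 : ℝ) < d := Nat.cast_pos.mpr j.pos
  unfold axisMesh
  field_simp

lemma axisMesh_pos {M : Matrix (Fin d) (Fin d) ℝ} (hM : IsUnit M) {r : ℝ} (hr : 0 < r)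
    (j : Fin d) : 0 < axisMesh M r j :=
  div_pos hr (mul_pos (Nat.cast_pos.mpr j.pos)
    (Real.sqrt_pos.mpr (eigenvalues_transpose_mul_self_pos hM j)))

lemma card_ellipsoidNet_mul_Zmat_le {M : Matrix (Fin d) (Fin d) ℝ} (hM : IsUnit M) {r R : ℝ}
    (hr : 0 < r) (hR : 0 ≤ R) (c : EuclideanSpace ℝ (Fin d)) :
    ((ellipsoidNet M r R c).card : ℝ) * Zmat M r ≤ (2 * R * d + 1) ^ d := by
  set α : Fin d → ℝ := fun j => √((isHermitian_transpose_mul_self M).eigenvalues j)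
  have hα (j : Fin d) : 0 < α j := Real.sqrt_pos.mpr (eigenvalues_transpose_mul_self_pos hM j)
  have hZ : Zmat M r = ∏ j, min r (α j) / α j :=
    prod_sval_eq_prod_sqrt_eigenvalues M fun z => min r z / z
  have hcard : ((ellipsoidNet M r R c).card : ℝ) ≤ ∏ j, (⌊2 * R / axisMesh M r j⌋₊ + 1 : ℝ) := by
    unfold ellipsoidNet
    refine (Nat.cast_le.mpr Finset.card_image_le).trans_eq ?_
    simp [Fintype.card_piFinset]
  calc ((ellipsoidNet M r R c).card : ℝ) * Zmat M r
      ≤ (∏ j, (⌊2 * R / axisMesh M r j⌋₊ + 1 : ℝ)) * ∏ j, min r (α j) / α j := by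
        rw [← hZ]
        exact mul_le_mul_of_nonneg_right hcard (Zmat_nonneg M hr.le)
    _ = ∏ j, (⌊2 * R / axisMesh M r j⌋₊ + 1 : ℝ) * (min r (α j) / α j) :=
        Finset.prod_mul_distrib.symm
    _ ≤ ∏ _j : Fin d, (2 * R * d + 1) := Finset.prod_le_prod
        (fun j _ => mul_nonneg (by positivity) (div_nonneg (le_min hr.le (hα j).le) (hα j).le))
        fun j _ => floor_add_one_mul_min_div_le hR (axisMesh_pos hM hr j) (hα j)
          (Nat.cast_nonneg d) (by
            rw [mul_assoc, mul_comm (d : ℝ), ← mul_assoc, axisMesh_mul_sqrt_eigenvalues hM,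
              div_mul_cancel₀ _ (Nat.cast_pos.mpr j.pos).ne'])
    _ = (2 * R * d + 1) ^ d := by simp

lemma exists_mem_ellipsoidNet_norm_sub_le {M : Matrix (Fin d) (Fin d) ℝ} (hM : IsUnit M)
    {r R : ℝ} (hr : 0 < r) (c : EuclideanSpace ℝ (Fin d)) {v : EuclideanSpace ℝ (Fin d)}
    (hv : ‖v‖ ≤ R) : ∃ p ∈ ellipsoidNet M r R c, ‖c + mCLM M v - p‖ ≤ r := by
  set B := (isHermitian_transpose_mul_self M).eigenvectorBasis
  have hcoord (j : Fin d) : |B.repr v j| ≤ R :=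
    (PiLp.norm_apply_le (B.repr v) j).trans (by rwa [LinearIsometryEquiv.norm_map])
  choose t ht hts using fun j =>
    exists_lt_floor_add_one_abs_sub_le (hcoord j) (axisMesh_pos hM hr j)
  refine ⟨_, Finset.mem_image_of_mem _ (Fintype.mem_piFinset.mpr fun j =>
    Finset.mem_range.mpr (ht j)), ?_⟩
  have hdiff : c + mCLM M v - (c + ∑ j, (-R + t j * axisMesh M r j) • mCLM M (B j)) =
      ∑ j, (B.repr v j - (-R + t j * axisMesh M r j)) • mCLM M (B j) := by
    conv_lhs => rw [← B.sum_repr v]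
    simp only [map_sum, map_smul, sub_smul, Finset.sum_sub_distrib]
    abel
  have hterm (j : Fin d) :
      ‖(B.repr v j - (-R + t j * axisMesh M r j)) • mCLM M (B j)‖ ≤ r / d := by
    rw [norm_smul, Real.norm_eq_abs, norm_mCLM_eigenvectorBasis,
      ← axisMesh_mul_sqrt_eigenvalues hM r j]
    gcongr
    exact hts j
  rw [hdiff]
  calc ‖∑ j, (B.repr v j - (-R + t j * axisMesh M r j)) • mCLM M (B j)‖
      ≤ ∑ _j : Fin d, r / d := norm_sum_le_of_le _ fun j _ => hterm j
    _ = d * (r / d) := by simp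
    _ ≤ r := by
        rcases Nat.eq_zero_or_pos d with h | h
        · simp [h, hr.le]
        · rw [mul_div_cancel₀ _ (by positivity)]

end SingularValues

section BadSet

variable {m d : ℕ} (T : Fin m → Matrix (Fin d) (Fin d) ℝ)
  (a : Fin m → EuclideanSpace ℝ (Fin d)) (μ : Measure (ℕ → Fin m)) {c A : ℝ}

lemma cylinder_eq_preimage (x : ℕ → Fin m) (ℓ : ℕ) :
    cylinder x ℓ = (fun y (k : Fin ℓ) => y k) ⁻¹' {fun k : Fin ℓ => x k} := by
  ext y
  simp [cylinder, funext_iff, Fin.forall_iff]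

lemma cylinder_eq_of_mem {x y : ℕ → Fin m} {ℓ : ℕ} (h : y ∈ cylinder x ℓ) :
    cylinder y ℓ = cylinder x ℓ := by
  ext z
  exact ⟨fun hz k hk => (hz k hk).trans (h k hk), fun hz k hk => (hz k hk).trans (h k hk).symm⟩

def coveringConstant (d : ℕ) (R : ℝ) : ℝ :=
  2 ^ d * (2 * R * d + 1) ^ d

lemma coveringConstant_nonneg (d : ℕ) {R : ℝ} (hR : 0 ≤ R) : 0 ≤ coveringConstant d R := by
  unfold coveringConstant
  positivity

def badSet (r w : ℝ) (ℓ : ℕ) : Set (ℕ → Fin m) :=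
  {x | μ (codingMap T a ⁻¹' closedBall (codingMap T a x) r) <
    ENNReal.ofReal (w * Zword T x ℓ r) * μ (cylinder x ℓ)}

/-- Deep cylinders are mapped into balls of radius `r`, so they contain no bad points. -/
lemma badSet_eq_empty (hc0 : 0 ≤ c) (hc1 : c < 1) (hc : ∀ i, ‖mCLM (T i)‖ ≤ c)
    (hA : ∀ i, ‖a i‖ ≤ A) {r w : ℝ} (hr : 0 ≤ r) (hw : w ≤ 1) {ℓ : ℕ}
    (hℓ : 2 * (A / (1 - c)) * c ^ ℓ ≤ r) : badSet T a μ r w ℓ = ∅ := by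
  refine Set.eq_empty_of_forall_notMem fun x => ?_
  change ¬ (_ : ℝ≥0∞) < _
  rw [not_lt]
  calc ENNReal.ofReal (w * Zword T x ℓ r) * μ (cylinder x ℓ) ≤ 1 * μ (cylinder x ℓ) := by
        gcongr
        exact ENNReal.ofReal_le_one.mpr
          (mul_le_one₀ hw (Zmat_nonneg _ hr) (Zmat_le_one _ hr))
    _ = μ (cylinder x ℓ) := one_mul _
    _ ≤ μ (codingMap T a ⁻¹' closedBall (codingMap T a x) r) := measure_mono fun y hy => by
        rw [Set.mem_preimage, mem_closedBall, dist_eq_norm]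
        exact (norm_codingMap_sub_le_of_agree T a hc0 hc1 hc hA hy).trans hℓ

/-- On `[x₀|ℓ]` the coding map is `π^a_ℓ(x₀) + T_{x₀|ℓ} ∘ π^a ∘ σ^ℓ`, so its image is covered by
`r/2`-balls around a net `P` with `#P Z_{x₀|ℓ}(r) ≤ coveringConstant`. Each such ball that meets
the image of a bad point `x` lies in the `r`-ball about `π^a x`, whose mass is small by badness. -/
lemma measure_badSet_inter_cylinder_le (hT : ∀ i, IsUnit (T i)) (hc0 : 0 ≤ c) (hc1 : c < 1)
    (hc : ∀ i, ‖mCLM (T i)‖ ≤ c) (hA : ∀ i, ‖a i‖ ≤ A) {r w : ℝ} (hr : 0 < r) (hw : 0 ≤ w)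
    {ℓ : ℕ} (x₀ : ℕ → Fin m) :
    μ (badSet T a μ r w ℓ ∩ cylinder x₀ ℓ) ≤
      ENNReal.ofReal (w * coveringConstant d (A / (1 - c))) * μ (cylinder x₀ ℓ) := by
  set W := wordProd T x₀ ℓ
  have hR : 0 ≤ A / (1 - c) := div_nonneg ((norm_nonneg _).trans (hA (x₀ 0))) (by linarith)
  set P := ellipsoidNet W (r / 2) (A / (1 - c)) (partialCoding T a x₀ ℓ)
  have hPcard := card_ellipsoidNet_mul_Zmat_le (isUnit_wordProd T hT x₀ ℓ) (half_pos hr) hR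
    (partialCoding T a x₀ ℓ)
  have hcover (x) (hx : x ∈ badSet T a μ r w ℓ ∩ cylinder x₀ ℓ) :
      ∃ p ∈ P, dist (codingMap T a x) p ≤ r / 2 := by
    obtain ⟨p, hp, hxp⟩ := exists_mem_ellipsoidNet_norm_sub_le (isUnit_wordProd T hT x₀ ℓ)
      (half_pos hr) _ (norm_codingMap_le T a hc0 hc1 hc hA fun k => x (k + ℓ))
    refine ⟨p, hp, ?_⟩
    rwa [dist_eq_norm, codingMap_eq_shift T a hc0 hc1 hc hA x ℓ, wordProd_congr T hx.2,
      partialCoding_congr T a hx.2, add_comm]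
  have hsmall (x) (hx : x ∈ badSet T a μ r w ℓ ∩ cylinder x₀ ℓ) :
      μ (codingMap T a ⁻¹' closedBall (codingMap T a x) r) ≤
        ENNReal.ofReal (w * Zmat W r) * μ (cylinder x₀ ℓ) := by
    have hbad : μ _ < _ * μ _ := hx.1
    rw [Zword, wordProd_congr T hx.2, cylinder_eq_of_mem hx.2] at hbad
    exact hbad.le
  have hPZ : P.card * (w * Zmat W r) ≤ w * coveringConstant d (A / (1 - c)) := by
    have hZ := Zmat_le_two_pow_mul_Zmat_half W hr.le
    rw [mul_left_comm, coveringConstant]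
    refine mul_le_mul_of_nonneg_left ?_ hw
    calc (P.card : ℝ) * Zmat W r ≤ P.card * (2 ^ d * Zmat W (r / 2)) := by gcongr
      _ = 2 ^ d * (P.card * Zmat W (r / 2)) := by ring
      _ ≤ 2 ^ d * (2 * (A / (1 - c)) * d + 1) ^ d := by gcongr
  calc μ (badSet T a μ r w ℓ ∩ cylinder x₀ ℓ)
      ≤ P.card * (ENNReal.ofReal (w * Zmat W r) * μ (cylinder x₀ ℓ)) :=
        measure_le_card_mul_of_cover μ (codingMap T a) hcover hsmall
    _ = ENNReal.ofReal (P.card * (w * Zmat W r)) * μ (cylinder x₀ ℓ) := by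
        rw [ENNReal.ofReal_mul (Nat.cast_nonneg _), ENNReal.ofReal_natCast, mul_assoc]
    _ ≤ _ := by gcongr

lemma measure_badSet_le [IsProbabilityMeasure μ] (hT : ∀ i, IsUnit (T i)) (hc0 : 0 ≤ c)
    (hc1 : c < 1) (hc : ∀ i, ‖mCLM (T i)‖ ≤ c) (hA : ∀ i, ‖a i‖ ≤ A) {r w : ℝ} (hr : 0 < r)
    (hw : 0 ≤ w) (ℓ : ℕ) :
    μ (badSet T a μ r w ℓ) ≤ ENNReal.ofReal (w * coveringConstant d (A / (1 - c))) := by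
  have hprefix : Measurable fun (y : ℕ → Fin m) (k : Fin ℓ) => y k :=
    measurable_pi_lambda _ fun k => measurable_pi_apply _
  simpa using measure_le_mul_of_forall_fiber μ hprefix fun I => by
    rcases Set.eq_empty_or_nonempty ((fun (y : ℕ → Fin m) (k : Fin ℓ) => y k) ⁻¹' {I})
      with h | ⟨x₀, rfl⟩
    · simp [h]
    · rw [← cylinder_eq_preimage]
      exact measure_badSet_inter_cylinder_le T a μ hT hc0 hc1 hc hA hr hw x₀

lemma measure_iUnion_badSet_le [IsProbabilityMeasure μ] (hT : ∀ i, IsUnit (T i))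
    (hc0 : 0 ≤ c) (hc1 : c < 1) (hc : ∀ i, ‖mCLM (T i)‖ ≤ c) (hA : ∀ i, ‖a i‖ ≤ A) {r w : ℝ}
    (hr : 0 < r) (hw0 : 0 ≤ w) (hw1 : w ≤ 1) {L : ℕ} (hL : 2 * (A / (1 - c)) * c ^ L ≤ r) :
    μ (⋃ ℓ, badSet T a μ r w ℓ) ≤ L * ENNReal.ofReal (w * coveringConstant d (A / (1 - c))) := by
  have hsub : ⋃ ℓ, badSet T a μ r w ℓ ⊆ ⋃ ℓ ∈ Finset.range L, badSet T a μ r w ℓ := by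
    refine Set.iUnion_subset fun ℓ x hx => ?_
    rcases lt_or_ge ℓ L with hℓ | hℓ
    · exact Set.mem_biUnion (Finset.mem_range.mpr hℓ) hx
    have hR : 0 ≤ A / (1 - c) := div_nonneg ((norm_nonneg _).trans (hA (x 0))) (by linarith)
    have hdeep : 2 * (A / (1 - c)) * c ^ ℓ ≤ r :=
      hL.trans' (mul_le_mul_of_nonneg_left (pow_le_pow_of_le_one hc0 hc1.le hℓ) (by positivity))
    rw [badSet_eq_empty T a μ hc0 hc1 hc hA hr.le hw1 hdeep] at hx
    exact hx.elim
  calc μ (⋃ ℓ, badSet T a μ r w ℓ) ≤ ∑ ℓ ∈ Finset.range L, μ (badSet T a μ r w ℓ) :=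
        (measure_mono hsub).trans (measure_biUnion_finset_le _ _)
    _ ≤ ∑ _ℓ ∈ Finset.range L, ENNReal.ofReal (w * coveringConstant d (A / (1 - c))) :=
        Finset.sum_le_sum fun ℓ _ => measure_badSet_le T a μ hT hc0 hc1 hc hA hr hw0 ℓ
    _ = L * ENNReal.ofReal (w * coveringConstant d (A / (1 - c))) := by simp

end BadSet

theorem statement10_general (m d : ℕ)
    (T : Fin m → Matrix (Fin d) (Fin d) ℝ)
    (hTinv : ∀ i, IsUnit (T i))
    (hT1 : ∀ i, ‖mCLM (T i)‖ < 1)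
    (a : Fin m → EuclideanSpace ℝ (Fin d))
    (γ : ℝ) (hγ : γ ∈ Set.Ioo (0 : ℝ) 1) (ε : ℝ) (hε : 0 < ε)
    (μ : Measure (ℕ → Fin m)) (hμ : IsProbabilityMeasure μ) :
    ∀ᵐ x ∂μ, ∃ N : ℕ, ∀ n ≥ N, ∀ ℓ : ℕ,
      ENNReal.ofReal (γ ^ ((n : ℝ) * ε) * Zword T x ℓ (γ ^ n)) * μ (cylinder x ℓ)
        ≤ (μ.map (codingMap T a)) (closedBall (codingMap T a x) (γ ^ n)) := by
  set c : ℝ≥0 := Finset.univ.sup fun i => ‖mCLM (T i)‖₊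
  have hc1 : (c : ℝ) < 1 := NNReal.coe_lt_one.mpr <|
    (Finset.sup_lt_iff zero_lt_one).mpr fun i _ => NNReal.coe_lt_one.mp (hT1 i)
  have hc (i : Fin m) : ‖mCLM (T i)‖ ≤ c :=
    Finset.le_sup (f := fun i => ‖mCLM (T i)‖₊) (Finset.mem_univ i)
  set A := ∑ j, ‖a j‖
  have hA (i : Fin m) : ‖a i‖ ≤ A :=
    Finset.single_le_sum (fun j _ => norm_nonneg (a j)) (Finset.mem_univ i)
  set K := coveringConstant d (A / (1 - c))
  have hK : 0 ≤ K := coveringConstant_nonneg d (div_nonneg (by positivity) (by linarith))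
  obtain ⟨B₀, B₁, hB⟩ := exists_mul_pow_add_mul_le c.2 hc1 hγ.1 (2 * (A / (1 - c)))
  have hbad (n : ℕ) : μ (⋃ ℓ, badSet T a μ (γ ^ n) (γ ^ ((n : ℝ) * ε)) ℓ) ≤
      ((B₀ + B₁ * n : ℕ) : ℝ≥0∞) * ENNReal.ofReal ((γ ^ ε) ^ n * K) := by
    rw [← Real.rpow_natCast (γ ^ ε), ← Real.rpow_mul hγ.1.le, mul_comm ε]
    exact measure_iUnion_badSet_le T a μ hTinv c.2 hc1 hc hA (pow_pos hγ.1 n)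
      (Real.rpow_nonneg hγ.1.le _) (Real.rpow_le_one hγ.1.le hγ.2.le (by positivity)) (hB n)
  have hsum := ne_top_of_le_ne_top (tsum_natCast_mul_ofReal_pow_mul_ne_top
    (Real.rpow_nonneg hγ.1.le ε) (Real.rpow_lt_one hγ.1.le hγ.2 hε) B₀ B₁ hK)
    (ENNReal.tsum_le_tsum hbad)
  filter_upwards [ae_eventually_notMem hsum] with x hx
  obtain ⟨N, hN⟩ := eventually_atTop.mp hx
  refine ⟨N, fun n hn ℓ => ?_⟩
  rw [Measure.map_apply (measurable_codingMap T a c.2 hc1 hc hA) measurableSet_closedBall]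
  exact not_lt.mp fun h => hN n hn (Set.mem_iUnion.mpr ⟨ℓ, h⟩)

theorem statement10 (m d : ℕ) (hm : 1 ≤ m) (hd : 1 ≤ d)
    (T : Fin m → Matrix (Fin d) (Fin d) ℝ)
    (hTinv : ∀ i, IsUnit (T i))
    (hT1 : ∀ i, ‖mCLM (T i)‖ < 1)
    (a : Fin m → EuclideanSpace ℝ (Fin d))
    (γ : ℝ) (hγ : γ ∈ Set.Ioo (0 : ℝ) 1) (ε : ℝ) (hε : 0 < ε)
    (μ : Measure (ℕ → Fin m)) (hμ : IsProbabilityMeasure μ) :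
    ∀ᵐ x ∂μ, ∃ N : ℕ, ∀ n ≥ N, ∀ ℓ : ℕ,
      ENNReal.ofReal (γ ^ ((n : ℝ) * ε) * Zword T x ℓ (γ ^ n)) * μ (cylinder x ℓ)
        ≤ (μ.map (codingMap T a)) (closedBall (codingMap T a x) (γ ^ n)) :=
  statement10_general m d T hTinv hT1 a γ hγ ε hε μ hμ

end SelfAffineProj
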